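/- There exists a set W of integral points of SATP_LP(m,n) with |W| = 2^{min(m,n)} such that any two distinct elements of W are adjacent as vertices of SATP(m,n); hence the clique number of the 1-skeleton of SATP(m,n) is at least 2^{min(m,n)}. -/

import Mathlib

open Finset

/-- A point of ℝ^{6mn}: coordinates x^{k,l}_{i,j} with `i : Fin m`, `j : Fin n`,
`k : Fin 3` (the paper's k-1, since the paper indexes k ∈ {1,2,3}) and
`l : Fin 2` (the paper's l-1). -/
abbrev Pt (m n : ℕ) := Fin m → Fin n → Fin 3 → Fin 2 → ℝ

/-- The relaxation polytope SATP_LP(m,n), given by the constraints (i)-(iv). -/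
def SATPLP (m n : ℕ) : Set (Pt m n) :=
  {x | (∀ i j, ∑ k, ∑ l, x i j k l = 1) ∧
       (∀ i j t, ∑ k, x i j k 0 = ∑ k, x i t k 0) ∧
       (∀ k j i s, x i j k 0 + x i j k 1 = x s j k 0 + x s j k 1) ∧
       (∀ i j k l, 0 ≤ x i j k l)}

/-- The integral points of SATP_LP(m,n): the points all of whose coordinates are 0 or 1. -/
def IntPts (m n : ℕ) : Set (Pt m n) :=
  {x | x ∈ SATPLP m n ∧ ∀ i j k l, x i j k l = 0 ∨ x i j k l = 1}

/-- SATP(m,n): the convex hull of the integral points of SATP_LP(m,n). -/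
def SATP (m n : ℕ) : Set (Pt m n) := convexHull ℝ (IntPts m n)

/-- Two distinct integral points u, v of SATP_LP(m,n) are adjacent (as vertices of
SATP(m,n)) iff the segment [u,v] is disjoint from the convex hull of the remaining
integral points. -/
def IsAdjacent {m n : ℕ} (u v : Pt m n) : Prop :=
  u ∈ IntPts m n ∧ v ∈ IntPts m n ∧ u ≠ v ∧
  segment ℝ u v ∩ convexHull ℝ (IntPts m n \ {u, v}) = ∅

/-!
Every integral point of SATP_LP(m,n) is a `vertex K L`: the 0/1 point whose only 1 in cell
`(i,j)` sits at `(K j, L i)`. If `Ka tn ≠ Kb tn` and `La tm ≠ Lb tm`, a vertex all of whose ones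
lie in the supports of `vertex Ka La` and `vertex Kb Lb` must agree with one of them at `(tm,tn)`,
and this propagates along row `tm` and column `tn` to the whole vertex. Hence the linear functional
summing the coordinates outside both supports vanishes on the segment between them and is positive
on every other integral point, so they are adjacent. Writing `a : Fin (min m n) → Fin 2` into the
first `min m n` entries of both `K` and `L` gives `2 ^ min m n` vertices, any two of which differ
in `K` and in `L` at a common index.
-/

section Convex

variable {E : Type*} [AddCommGroup E] [Module ℝ E]

lemma segment_inter_convexHull_eq_empty_of_isLinearMap {φ : E → ℝ} (hφ : IsLinearMap ℝ φ)
    {u v : E} {S : Set E} (hu : φ u = 0) (hv : φ v = 0) (hS : ∀ w ∈ S, 0 < φ w) :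
    segment ℝ u v ∩ convexHull ℝ S = ∅ := by
  have hseg : segment ℝ u v ⊆ {w | φ w = 0} := (convex_hyperplane hφ 0).segment_subset hu hv
  have hhull : convexHull ℝ S ⊆ {w | 0 < φ w} := convexHull_min hS (convex_halfSpace_gt hφ 0)
  exact Set.eq_empty_of_forall_notMem fun w hw => (hhull hw.2).ne' (hseg hw.1)

end Convex

lemma exists_eq_ite_of_sum_eq_one {α : Type*} [Fintype α] [DecidableEq α] {f : α → ℝ}
    (h01 : ∀ a, f a = 0 ∨ f a = 1) (hsum : ∑ a, f a = 1) :
    ∃ a, ∀ b, f b = if b = a then 1 else 0 := by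
  obtain ⟨a, -, ha⟩ := exists_ne_zero_of_sum_ne_zero (hsum ▸ one_ne_zero : ∑ a, f a ≠ 0)
  refine ⟨a, fun b => ?_⟩
  split_ifs with hba
  · exact hba ▸ (h01 a).resolve_left ha
  refine (h01 b).resolve_right fun hb => ?_
  have : ∑ c ∈ {b, a}, f c ≤ ∑ c, f c :=
    sum_le_univ_sum_of_nonneg fun c => by rcases h01 c with h | h <;> simp [h]
  rw [sum_pair hba, hsum, hb, (h01 a).resolve_left ha] at this
  norm_num at this

variable {m n : ℕ}

def vertex (K : Fin n → Fin 3) (L : Fin m → Fin 2) : Pt m n :=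
  fun i j k l => if k = K j ∧ l = L i then 1 else 0

lemma vertex_apply_eq_one_iff {K : Fin n → Fin 3} {L : Fin m → Fin 2} {i j k l} :
    vertex K L i j k l = 1 ↔ k = K j ∧ l = L i := by
  simp [vertex]

lemma vertex_mem_intPts (K : Fin n → Fin 3) (L : Fin m → Fin 2) :
    vertex K L ∈ IntPts m n := by
  refine ⟨⟨fun i j => ?_, fun i j t => ?_, fun k j i s => ?_, fun i j k l => ?_⟩,
    fun i j k l => ?_⟩
  · simp [vertex, ite_and]
  · simp [vertex, ite_and]
  · rw [← Fin.sum_univ_two (vertex K L i j k), ← Fin.sum_univ_two (vertex K L s j k)]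
    simp [vertex, ite_and]
  · unfold vertex; positivity
  · unfold vertex; split_ifs <;> simp

lemma Fin.two_eq_iff_eq_zero_iff {a b : Fin 2} : a = b ↔ (a = 0 ↔ b = 0) := by
  revert a b; decide

lemma exists_eq_vertex_of_mem_intPts {x : Pt m n} (hx : x ∈ IntPts m n) :
    ∃ K L, x = vertex K L := by
  obtain ⟨⟨hsum, hcol, hrow, -⟩, h01⟩ := hx
  have hcell : ∀ i j, ∃ p : Fin 3 × Fin 2,
      ∀ k l, x i j k l = if k = p.1 ∧ l = p.2 then 1 else 0 := fun i j =>
    (exists_eq_ite_of_sum_eq_one (fun q => h01 i j q.1 q.2)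
      (by rw [Fintype.sum_prod_type]; exact hsum i j)).imp
      fun p hp k l => by simpa [Prod.ext_iff] using hp (k, l)
  choose p hp using hcell
  have hL : ∀ i j t, (p i j).2 = (p i t).2 := by
    intro i j t
    have hcol_ijt := hcol i j t
    simp only [hp, ite_and, sum_ite_eq', mem_univ, if_true] at hcol_ijt
    rw [Fin.two_eq_iff_eq_zero_iff]
    split_ifs at hcol_ijt <;> simp_all [eq_comm]
  have hK : ∀ i s j, (p i j).1 = (p s j).1 := by
    intro i s j
    have hrow_ijs := hrow (p i j).1 j i s
    rw [← Fin.sum_univ_two (x i j _), ← Fin.sum_univ_two (x s j _)] at hrow_ijs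
    simpa [hp, ite_and] using hrow_ijs
  rcases isEmpty_or_nonempty (Fin m) with _ | ⟨⟨i₀⟩⟩
  · exact ⟨0, 0, Subsingleton.elim _ _⟩
  rcases isEmpty_or_nonempty (Fin n) with _ | ⟨⟨j₀⟩⟩
  · exact ⟨0, 0, Subsingleton.elim _ _⟩
  refine ⟨fun j => (p i₀ j).1, fun i => (p i j₀).2, ?_⟩
  ext i j k l
  simp only [hp, vertex, hK i₀ i, hL i j j₀]

noncomputable def offSupportMass (u v x : Pt m n) : ℝ :=
  ∑ i, ∑ j, ∑ k, ∑ l, if u i j k l = 0 ∧ v i j k l = 0 then x i j k l else 0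

lemma isLinearMap_offSupportMass (u v : Pt m n) : IsLinearMap ℝ (offSupportMass u v) where
  map_add x y := by simp only [offSupportMass, Pi.add_apply, ite_add_zero, sum_add_distrib]
  map_smul c x := by
    simp only [offSupportMass, Pi.smul_apply, smul_eq_mul, mul_sum, mul_ite, mul_zero]

lemma offSupportMass_left (u v : Pt m n) : offSupportMass u v u = 0 := by
  simp +contextual [offSupportMass]

lemma offSupportMass_right (u v : Pt m n) : offSupportMass u v v = 0 := by
  simp +contextual [offSupportMass]

lemma offSupportMass_pos {u v x : Pt m n} (hx : ∀ i j k l, 0 ≤ x i j k l) {i j k l}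
    (hu : u i j k l = 0) (hv : v i j k l = 0) (hpos : 0 < x i j k l) :
    0 < offSupportMass u v x := by
  have hterm : ∀ i j k l, 0 ≤ if u i j k l = 0 ∧ v i j k l = 0 then x i j k l else 0 :=
    fun i j k l => by split_ifs <;> simp [hx i j k l]
  calc 0 < x i j k l := hpos
    _ = if u i j k l = 0 ∧ v i j k l = 0 then x i j k l else 0 := (if_pos ⟨hu, hv⟩).symm
    _ ≤ offSupportMass u v x := by
      simp only [offSupportMass, ← Fintype.sum_prod_type']
      exact single_le_sum (fun c _ => hterm c.1 c.2.1 c.2.2.1 c.2.2.2) (mem_univ (i, j, k, l))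

lemma isAdjacent_of_forall_eq_or_eq {u v : Pt m n} (hu : u ∈ IntPts m n) (hv : v ∈ IntPts m n)
    (huv : u ≠ v)
    (h : ∀ w ∈ IntPts m n, (∀ i j k l, w i j k l = 1 → u i j k l = 1 ∨ v i j k l = 1) →
      w = u ∨ w = v) :
    IsAdjacent u v := by
  refine ⟨hu, hv, huv, segment_inter_convexHull_eq_empty_of_isLinearMap
    (isLinearMap_offSupportMass u v) (offSupportMass_left u v) (offSupportMass_right u v) ?_⟩
  rintro w ⟨hw, hwuv⟩
  obtain ⟨i, j, k, l, hw1, hu1, hv1⟩ :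
      ∃ i j k l, w i j k l = 1 ∧ u i j k l ≠ 1 ∧ v i j k l ≠ 1 := by
    by_contra! hsub
    exact hwuv (h w hw fun i j k l hw1 => or_iff_not_imp_left.2 (hsub i j k l hw1))
  exact offSupportMass_pos hw.1.2.2.2 ((hu.2 i j k l).resolve_right hu1)
    ((hv.2 i j k l).resolve_right hv1) (hw1 ▸ one_pos)

lemma eq_and_eq_of_forall_or {Ka Kb K : Fin n → Fin 3} {La Lb L : Fin m → Fin 2} {tm : Fin m}
    {tn : Fin n} (hK : Ka tn ≠ Kb tn) (hL : La tm ≠ Lb tm)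
    (h : ∀ i j, (K j = Ka j ∧ L i = La i) ∨ (K j = Kb j ∧ L i = Lb i))
    (hKt : K tn = Ka tn) (hLt : L tm = La tm) : K = Ka ∧ L = La := by
  constructor
  · funext j
    rcases h tm j with ⟨hj, -⟩ | ⟨-, hj⟩
    · exact hj
    · exact absurd (hLt.symm.trans hj) hL
  · funext i
    rcases h i tn with ⟨-, hi⟩ | ⟨hi, -⟩
    · exact hi
    · exact absurd (hKt.symm.trans hi) hK

theorem isAdjacent_vertex {Ka Kb : Fin n → Fin 3} {La Lb : Fin m → Fin 2} {tm : Fin m}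
    {tn : Fin n}
    (hK : Ka tn ≠ Kb tn) (hL : La tm ≠ Lb tm) : IsAdjacent (vertex Ka La) (vertex Kb Lb) := by
  have hne : vertex Ka La ≠ vertex Kb Lb := fun h => by
    simpa [vertex, hK] using congrFun (congrFun (congrFun (congrFun h tm) tn) (Ka tn)) (La tm)
  refine isAdjacent_of_forall_eq_or_eq (vertex_mem_intPts _ _) (vertex_mem_intPts _ _) hne ?_
  intro w hw hsub
  obtain ⟨K, L, rfl⟩ := exists_eq_vertex_of_mem_intPts hw
  have h : ∀ i j, (K j = Ka j ∧ L i = La i) ∨ (K j = Kb j ∧ L i = Lb i) := fun i j => by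
    simpa only [vertex_apply_eq_one_iff] using
      hsub i j (K j) (L i) (vertex_apply_eq_one_iff.2 ⟨rfl, rfl⟩)
  rcases h tm tn with ⟨hKt, hLt⟩ | ⟨hKt, hLt⟩
  · obtain ⟨rfl, rfl⟩ := eq_and_eq_of_forall_or hK hL h hKt hLt
    exact Or.inl rfl
  · obtain ⟨rfl, rfl⟩ :=
      eq_and_eq_of_forall_or hK.symm hL.symm (fun i j => (h i j).symm) hKt hLt
    exact Or.inr rfl

theorem stmt11_general (m n : ℕ) :
    ∃ W : Finset (Pt m n),
      ↑W ⊆ IntPts m n ∧ W.card = 2 ^ min m n ∧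
      ∀ u ∈ W, ∀ v ∈ W, u ≠ v → IsAdjacent u v := by
  classical
  let f : (Fin (min m n) → Fin 2) → Pt m n := fun a =>
    vertex (Function.extend (Fin.castLE (min_le_right m n)) (Fin.castSucc ∘ a) 0)
      (Function.extend (Fin.castLE (min_le_left m n)) a 0)
  have hadj : ∀ a b, a ≠ b → IsAdjacent (f a) (f b) := by
    intro a b hab
    obtain ⟨t, ht⟩ := Function.ne_iff.mp hab
    exact isAdjacent_vertex (tm := Fin.castLE (min_le_left m n) t)
      (tn := Fin.castLE (min_le_right m n) t)
      (by simpa [(Fin.castLE_injective _).extend_apply] using ht)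
      (by simpa [(Fin.castLE_injective _).extend_apply] using ht)
  refine ⟨univ.image f, ?_, ?_, ?_⟩
  · simpa [Set.range_subset_iff] using fun a => vertex_mem_intPts _ _
  · rw [card_image_of_injective _ fun a b hfab => not_not.1 fun hab => (hadj a b hab).2.2.1 hfab]
    simp
  · simp only [mem_image, mem_univ, true_and]
    rintro _ ⟨a, rfl⟩ _ ⟨b, rfl⟩ hfab
    exact hadj a b (ne_of_apply_ne f hfab)

/-- there is a set W of integral points of SATP_LP(m,n) of cardinality
2^{min(m,n)} whose elements are pairwise adjacent as vertices of SATP(m,n); hence the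
clique number of the 1-skeleton of SATP(m,n) is at least 2^{min(m,n)}. -/
theorem stmt11 (m n : ℕ) (hm : 0 < m) (hn : 0 < n) :
    ∃ W : Finset (Pt m n),
      ↑W ⊆ IntPts m n ∧ W.card = 2 ^ min m n ∧
      ∀ u ∈ W, ∀ v ∈ W, u ≠ v → IsAdjacent u v :=
  stmt11_general m n
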